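/- arXiv:1212.0308 — 7 statements merged into one kernel-verified Lean document; each statement's English description precedes it below -/
import Mathlib

section
/- Let $q \geq 2$ and $d \geq 1$. Define $E(q,d) = \sum_{v=1}^{\infty} [1 - (1-q^{-v})^d]$. Then $|E(q,d) - \log_q d| \leq \frac{1}{\log 2}$, i.e., the distance between $E(q,d)$ and $\log d / \log q$ is bounded by $1/\log 2$. -/
/-
The summand `f x = 1 - (1 - q^{-x})^d` is antitone on `[0, ∞)` with `f 0 = 1`, so the integral
test squeezes `E(q,d) = ∑_{v ≥ 1} f v` between `∫₀^∞ f - 1` and `∫₀^∞ f`. Substituting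
`u = 1 - q^{-x}` turns the integral into `(log q)⁻¹ ∫₀¹ (1 - u^d) / (1 - u) du = H_d / log q`.
Since `log d ≤ H_d ≤ 1 + log d`, the error is at most `max 1 (log q)⁻¹ ≤ 1 / log 2`.
-/

open Filter Set Topology MeasureTheory Real

theorem AntitoneOn.integral_Ioi_le_tsum {f : ℝ → ℝ} (anti : AntitoneOn f (Ici 0))
    (integrable : IntegrableOn f (Ioi 0)) (nonneg : ∀ t ∈ Ioi 0, 0 ≤ f t) :
    ∫ x in Ioi 0, f x ≤ ∑' n : ℕ, f n := by
  have hnonneg (n : ℕ) : 0 ≤ f n :=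
    (nonneg (n + 1) (by simp only [mem_Ioi]; positivity)).trans
      (anti (by simp) (by simp; positivity) (by simp))
  refine le_of_tendsto (intervalIntegral_tendsto_integral_Ioi 0 integrable
    tendsto_natCast_atTop_atTop) (Eventually.of_forall fun N ↦ ?_)
  calc ∫ x in (0 : ℝ)..N, f x
      ≤ ∑ i ∈ Finset.range N, f i := by
        simpa using (anti.mono Icc_subset_Ici_self).integral_le_sum (x₀ := 0) (a := N)
    _ ≤ ∑' n : ℕ, f n :=
        (anti.summable_of_integrableOn_Ioi_zero integrable nonneg).sum_le_tsum _
          fun n _ ↦ hnonneg n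

noncomputable section

/-- With `c = log q`, `expTail c d x = 1 - (1 - q^{-x})^d`. -/
def expTail (c : ℝ) (d : ℕ) (x : ℝ) : ℝ := 1 - (1 - exp (-c * x)) ^ d

def expTailPrimitive (c : ℝ) (d : ℕ) (x : ℝ) : ℝ :=
  c⁻¹ * ∑ j ∈ Finset.range d, (1 - exp (-c * x)) ^ (j + 1) / (j + 1)

end

section expTail

variable {c : ℝ} {d : ℕ}

lemma exp_neg_mul_mem_Icc (hc : 0 ≤ c) {x : ℝ} (hx : 0 ≤ x) : exp (-c * x) ∈ Icc 0 1 :=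
  ⟨(exp_pos _).le, exp_le_one_iff.2 (by nlinarith)⟩

lemma antitoneOn_expTail (hc : 0 ≤ c) : AntitoneOn (expTail c d) (Ici 0) := by
  intro x hx y _ hxy
  have hexp : exp (-c * y) ≤ exp (-c * x) := exp_le_exp.2 (by nlinarith)
  have := (exp_neg_mul_mem_Icc hc hx).2
  unfold expTail
  gcongr

lemma expTail_nonneg (hc : 0 ≤ c) {x : ℝ} (hx : 0 ≤ x) : 0 ≤ expTail c d x := by
  obtain ⟨h0, h1⟩ := exp_neg_mul_mem_Icc hc hx
  have : (1 - exp (-c * x)) ^ d ≤ 1 := pow_le_one₀ (by linarith) (by linarith)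
  unfold expTail
  linarith

lemma expTail_zero (hd : d ≠ 0) : expTail c d 0 = 1 := by
  simp [expTail, hd]

lemma hasDerivAt_expTailPrimitive (hc : c ≠ 0) (x : ℝ) :
    HasDerivAt (expTailPrimitive c d) (expTail c d x) x := by
  have hu : HasDerivAt (fun y ↦ exp (-c * y)) (-c * exp (-c * x)) x := by
    simpa [mul_comm] using ((hasDerivAt_id x).const_mul (-c)).exp
  have hsum := (HasDerivAt.fun_sum fun j (_ : j ∈ Finset.range d) ↦
    ((hu.const_sub 1).pow (j + 1)).div_const ((j : ℝ) + 1)).const_mul c⁻¹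
  refine hsum.congr_deriv ?_
  have hterm (j : ℕ) :
      ↑(j + 1) * (1 - exp (-c * x)) ^ (j + 1 - 1) * -(-c * exp (-c * x)) / ((j : ℝ) + 1)
        = c * (exp (-c * x) * (1 - exp (-c * x)) ^ j) := by
    rw [Nat.add_sub_cancel]
    push_cast
    field_simp
  simpa only [hterm, ← Finset.mul_sum, inv_mul_cancel_left₀ hc, sub_sub_cancel, expTail]
    using mul_neg_geom_sum (1 - exp (-c * x)) d

lemma tendsto_expTailPrimitive (hc : 0 < c) :
    Tendsto (expTailPrimitive c d) atTop (𝓝 (c⁻¹ * harmonic d)) := by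
  have hexp : Tendsto (fun x ↦ exp (-c * x)) atTop (𝓝 0) :=
    (tendsto_exp_neg_atTop_nhds_zero.comp (tendsto_id.const_mul_atTop hc)).congr
      fun x ↦ by simp
  have hpoly : Continuous fun u : ℝ ↦
      c⁻¹ * ∑ j ∈ Finset.range d, (1 - u) ^ (j + 1) / ((j : ℝ) + 1) := by fun_prop
  convert (hpoly.tendsto 0).comp hexp using 2
  · ext x
    simp [expTailPrimitive]
  · rw [harmonic]
    push_cast
    simp

lemma integral_Ioi_expTail (hc : 0 < c) : ∫ x in Ioi 0, expTail c d x = c⁻¹ * harmonic d := by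
  rw [integral_Ioi_of_hasDerivAt_of_nonneg' (fun x _ ↦ hasDerivAt_expTailPrimitive hc.ne' x)
    (fun _ hx ↦ expTail_nonneg hc.le (le_of_lt hx)) (tendsto_expTailPrimitive hc)]
  simp [expTailPrimitive]

lemma integrableOn_Ioi_expTail (hc : 0 < c) : IntegrableOn (expTail c d) (Ioi 0) :=
  integrableOn_Ioi_deriv_of_nonneg' (fun x _ ↦ hasDerivAt_expTailPrimitive hc.ne' x)
    (fun _ hx ↦ expTail_nonneg hc.le (le_of_lt hx)) (tendsto_expTailPrimitive hc)

lemma tsum_expTail_succ_le (hc : 0 < c) :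
    ∑' n : ℕ, expTail c d (n + 1 : ℕ) ≤ c⁻¹ * harmonic d := by
  rw [← integral_Ioi_expTail hc]
  exact (antitoneOn_expTail hc.le).tsum_add_one_le_integral (integrableOn_Ioi_expTail hc)
    fun _ hx ↦ expTail_nonneg hc.le hx.out.le

lemma le_one_add_tsum_expTail_succ (hc : 0 < c) (hd : d ≠ 0) :
    c⁻¹ * harmonic d ≤ 1 + ∑' n : ℕ, expTail c d (n + 1 : ℕ) := by
  have hnonneg : ∀ x ∈ Ioi (0 : ℝ), 0 ≤ expTail c d x := fun _ hx ↦ expTail_nonneg hc.le hx.out.le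
  have hsum := (antitoneOn_expTail hc.le).summable_of_integrableOn_Ioi_zero
    (integrableOn_Ioi_expTail hc) hnonneg
  rw [← integral_Ioi_expTail hc, ← expTail_zero hd (c := c)]
  calc ∫ x in Ioi 0, expTail c d x
      ≤ ∑' n : ℕ, expTail c d n :=
        (antitoneOn_expTail hc.le).integral_Ioi_le_tsum (integrableOn_Ioi_expTail hc) hnonneg
    _ = expTail c d 0 + ∑' n : ℕ, expTail c d (n + 1 : ℕ) := by
        simpa using hsum.tsum_eq_zero_add

theorem abs_tsum_expTail_succ_sub_log_div_le (hc : 0 < c) (hd : d ≠ 0) :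
    |∑' n : ℕ, expTail c d (n + 1 : ℕ) - log d / c| ≤ max 1 c⁻¹ := by
  have hlog : log d ≤ harmonic d := by simpa using log_le_harmonic_floor d d.cast_nonneg
  have hc' : 0 ≤ c⁻¹ := inv_nonneg.2 hc.le
  rw [abs_sub_le_iff, div_eq_inv_mul]
  constructor
  · calc ∑' n : ℕ, expTail c d (n + 1 : ℕ) - c⁻¹ * log d
        ≤ c⁻¹ * (1 + log d) - c⁻¹ * log d := by
          gcongr
          exact (tsum_expTail_succ_le hc).trans (by gcongr; exact harmonic_le_one_add_log d)
      _ = c⁻¹ := by ring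
      _ ≤ max 1 c⁻¹ := le_max_right _ _
  · calc c⁻¹ * log d - ∑' n : ℕ, expTail c d (n + 1 : ℕ)
        ≤ c⁻¹ * harmonic d - ∑' n : ℕ, expTail c d (n + 1 : ℕ) := by gcongr
      _ ≤ 1 := by linarith [le_one_add_tsum_expTail_succ hc hd]
      _ ≤ max 1 c⁻¹ := le_max_left _ _

end expTail

lemma exp_neg_log_mul_natCast {q : ℝ} (hq : 0 < q) (n : ℕ) : exp (-log q * n) = q⁻¹ ^ n := by
  rw [neg_mul, exp_neg, mul_comm, exp_nat_mul, exp_log hq, inv_pow]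

/-- `|E(q,d) - log_q d| ≤ 1/log 2`. -/
theorem stmt2 (q : ℕ) (hq : 2 ≤ q) (d : ℕ) (hd : 1 ≤ d) :
    |(∑' v : ℕ, (1 - (1 - (q : ℝ)⁻¹ ^ (v + 1)) ^ d)) - Real.log d / Real.log q|
      ≤ 1 / Real.log 2 := by
  have hq2 : (2 : ℝ) ≤ q := by exact_mod_cast hq
  have hlog2 : 0 < log 2 := log_pos one_lt_two
  have hlogq : log 2 ≤ log q := log_le_log two_pos hq2
  have hseries : (fun v : ℕ ↦ 1 - (1 - (q : ℝ)⁻¹ ^ (v + 1)) ^ d)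
      = fun v : ℕ ↦ expTail (log q) d (v + 1 : ℕ) := by
    ext v
    rw [expTail, exp_neg_log_mul_natCast (by linarith)]
  rw [hseries]
  refine (abs_tsum_expTail_succ_sub_log_div_le (hlog2.trans_le hlogq) (by omega)).trans
    (max_le ?_ ?_)
  · rw [le_div_iff₀ hlog2, one_mul]
    exact (log_two_lt_d9.trans (by norm_num)).le
  · rw [one_div]
    exact inv_anti₀ hlog2 hlogq
end

section
/- Let $q \geq 2$ and $d \geq 1$ and set $E(q,d) = \sum_{v=1}^\infty [1-(1-q^{-v})^d]$. Then $\big|E(q,d) - \lfloor \log_q d \rfloor\big| < \frac{q}{q-1} \cdot q^{-\mathrm{dist}(\log_q d,\, \mathbb{N})}$, where $\lfloor \log_q d \rfloor$ is the integer part of $\log_q d$ and $\mathrm{dist}(\log_q d, \mathbb{N})$ is the distance from $\log_q d$ to the set of natural numbers. -/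
/-!
Put `x = log_q d` and `m = ⌊x⌋`. Splitting the series at `m` gives `E(q,d) - m = A - B`
with `A = ∑_{v > m} (1 - (1 - q^{-v})^d)` and `B = ∑_{v ≤ m} (1 - q^{-v})^d`, both
nonnegative, so it suffices to bound each by the right-hand side. Bernoulli's inequality
`1 - (1 - t)^d ≤ d t` makes `A` at most the geometric tail `q/(q-1) · q^{x-m-1}`, while
`(1 - t)^d ≤ e^{-dt} < (d t)⁻¹` makes `B` less than `q/(q-1) · q^{m-x}`. Both exponents are
at most `-dist(x, ℕ)`.
-/

open Real Finset

lemma one_sub_one_sub_pow_le {t : ℝ} (ht : t ≤ 2) (d : ℕ) : 1 - (1 - t) ^ d ≤ d * t := by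
  have := one_add_mul_le_pow (a := -t) (by linarith) d
  rw [← sub_eq_add_neg] at this
  linarith

lemma one_sub_one_sub_pow_lt {t : ℝ} (ht0 : t ≠ 0) (ht1 : t ≤ 1) {d : ℕ} (hd : 2 ≤ d) :
    1 - (1 - t) ^ d < d * t := by
  have hd' : (1 : ℝ) < d := by exact_mod_cast hd
  have := one_add_mul_self_lt_rpow_one_add (s := -t) (by linarith) (neg_ne_zero.2 ht0) hd'
  rw [← sub_eq_add_neg, rpow_natCast] at this
  linarith

lemma one_sub_pow_le_inv_one_add_mul {t : ℝ} (ht0 : 0 ≤ t) (ht1 : t ≤ 1) (d : ℕ) :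
    (1 - t) ^ d ≤ (1 + d * t)⁻¹ := by
  calc (1 - t) ^ d ≤ exp (-t) ^ d := pow_le_pow_left₀ (by linarith) (one_sub_le_exp_neg t) d
    _ = (exp (d * t))⁻¹ := by rw [← exp_nat_mul, ← exp_neg]; ring_nf
    _ ≤ (1 + d * t)⁻¹ := inv_anti₀ (by positivity) (by linarith [add_one_le_exp (d * t)])

lemma one_sub_one_sub_pow_nonneg {t : ℝ} (ht0 : 0 ≤ t) (ht1 : t ≤ 1) (d : ℕ) :
    0 ≤ 1 - (1 - t) ^ d :=
  sub_nonneg.2 (pow_le_one₀ (by linarith) (by linarith))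

lemma mul_inv_pow_eq_rpow_logb_sub {b y : ℝ} (hb : 0 < b) (hb1 : b ≠ 1) (hy : 0 < y) (n : ℕ) :
    y * b⁻¹ ^ n = b ^ (logb b y - n) := by
  rw [rpow_sub hb, rpow_logb hb hb1 hy, rpow_natCast, inv_pow, div_eq_mul_inv]

lemma pow_div_eq_rpow_sub_logb {b y : ℝ} (hb : 0 < b) (hb1 : b ≠ 1) (hy : 0 < y) (n : ℕ) :
    b ^ n / y = b ^ (n - logb b y) := by
  rw [rpow_sub hb, rpow_logb hb hb1 hy, rpow_natCast]

lemma infDist_range_natCast_le {x : ℝ} (hx : 0 ≤ x) :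
    Metric.infDist x (Set.range (Nat.cast : ℕ → ℝ)) ≤ x - ⌊x⌋₊ ∧
      Metric.infDist x (Set.range (Nat.cast : ℕ → ℝ)) ≤ ⌊x⌋₊ + 1 - x := by
  have hdist (n : ℕ) : Metric.infDist x (Set.range (Nat.cast : ℕ → ℝ)) ≤ |x - n| :=
    Real.dist_eq x n ▸ Metric.infDist_le_dist_of_mem (Set.mem_range_self n)
  have h₁ := hdist ⌊x⌋₊
  have h₂ := hdist (⌊x⌋₊ + 1)
  rw [abs_of_nonneg (by linarith [Nat.floor_le hx])] at h₁
  rw [abs_of_nonpos (by push_cast; linarith [Nat.lt_floor_add_one x])] at h₂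
  push_cast at h₂
  constructor <;> linarith

section

variable {q : ℝ}

lemma hasSum_inv_pow_add (hq : 1 < q) (n : ℕ) :
    HasSum (fun v : ℕ => q⁻¹ ^ (v + n)) (q / (q - 1) * q⁻¹ ^ n) := by
  have hq' : q - 1 ≠ 0 := by linarith
  have hterm : (fun v : ℕ => q⁻¹ ^ (v + n)) = fun v => q⁻¹ ^ n * q⁻¹ ^ v := by
    funext v
    rw [pow_add, mul_comm]
  have hsum : q / (q - 1) * q⁻¹ ^ n = q⁻¹ ^ n * (1 - q⁻¹)⁻¹ := by
    field_simp
  rw [hterm, hsum]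
  exact (hasSum_geometric_of_lt_one (by positivity) (inv_lt_one_of_one_lt₀ hq)).mul_left _

lemma inv_pow_le_one_of_one_le (hq : 1 ≤ q) (n : ℕ) : q⁻¹ ^ n ≤ 1 :=
  pow_le_one₀ (inv_nonneg.2 (by linarith)) (inv_le_one_of_one_le₀ hq)

lemma summable_one_sub_one_sub_inv_pow (hq : 1 < q) (d n : ℕ) :
    Summable fun v : ℕ => 1 - (1 - q⁻¹ ^ (v + n)) ^ d :=
  .of_nonneg_of_le
    (fun v => one_sub_one_sub_pow_nonneg (by positivity) (inv_pow_le_one_of_one_le hq.le _) d)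
    (fun v => one_sub_one_sub_pow_le (by linarith [inv_pow_le_one_of_one_le hq.le (v + n)]) d)
    ((hasSum_inv_pow_add hq n).summable.mul_left (d : ℝ))

lemma tsum_one_sub_one_sub_inv_pow_le (hq : 1 < q) (d n : ℕ) :
    ∑' v : ℕ, (1 - (1 - q⁻¹ ^ (v + n)) ^ d) ≤ q / (q - 1) * (d * q⁻¹ ^ n) := by
  rw [mul_left_comm]
  exact hasSum_le
    (fun v => one_sub_one_sub_pow_le (by linarith [inv_pow_le_one_of_one_le hq.le (v + n)]) d)
    (summable_one_sub_one_sub_inv_pow hq d n).hasSum ((hasSum_inv_pow_add hq n).mul_left (d : ℝ))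

lemma tsum_one_sub_one_sub_inv_pow_lt (hq : 1 < q) {d : ℕ} (hd : 2 ≤ d) (n : ℕ) :
    ∑' v : ℕ, (1 - (1 - q⁻¹ ^ (v + n)) ^ d) < q / (q - 1) * (d * q⁻¹ ^ n) := by
  rw [mul_left_comm]
  exact hasSum_lt (f := fun v => 1 - (1 - q⁻¹ ^ (v + n)) ^ d) (i := 0)
    (fun v => one_sub_one_sub_pow_le (by linarith [inv_pow_le_one_of_one_le hq.le (v + n)]) d)
    (one_sub_one_sub_pow_lt (by positivity) (inv_pow_le_one_of_one_le hq.le (0 + n)) hd)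
    (summable_one_sub_one_sub_inv_pow hq d n).hasSum ((hasSum_inv_pow_add hq n).mul_left (d : ℝ))

lemma sum_pow_succ_lt (hq : 1 < q) (m : ℕ) :
    ∑ v ∈ range m, q ^ (v + 1) < q / (q - 1) * q ^ m := by
  have hq' : 0 < q - 1 := by linarith
  simp only [pow_succ, ← sum_mul, geom_sum_eq hq.ne' m]
  rw [div_mul_eq_mul_div, div_mul_eq_mul_div, div_lt_div_iff_of_pos_right hq']
  nlinarith

lemma sum_one_sub_inv_pow_pow_lt (hq : 1 < q) {d : ℕ} (hd : 0 < d) (m : ℕ) :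
    ∑ v ∈ range m, (1 - q⁻¹ ^ (v + 1)) ^ d < q / (q - 1) * (q ^ m / d) := by
  have hd' : (0 : ℝ) < d := by exact_mod_cast hd
  have hterm : ∀ v ∈ range m, (1 - q⁻¹ ^ (v + 1)) ^ d ≤ q ^ (v + 1) / d := fun v _ => by
    calc (1 - q⁻¹ ^ (v + 1)) ^ d ≤ (1 + d * q⁻¹ ^ (v + 1))⁻¹ :=
          one_sub_pow_le_inv_one_add_mul (by positivity) (inv_pow_le_one_of_one_le hq.le _) d
      _ ≤ (d * q⁻¹ ^ (v + 1))⁻¹ := inv_anti₀ (by positivity) (by linarith)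
      _ = q ^ (v + 1) / d := by rw [mul_inv, inv_pow, inv_inv, div_eq_mul_inv, mul_comm]
  calc ∑ v ∈ range m, (1 - q⁻¹ ^ (v + 1)) ^ d ≤ ∑ v ∈ range m, q ^ (v + 1) / d :=
        sum_le_sum hterm
    _ = (∑ v ∈ range m, q ^ (v + 1)) / d := by rw [sum_div]
    _ < q / (q - 1) * q ^ m / d := div_lt_div_of_pos_right (sum_pow_succ_lt hq m) hd'
    _ = q / (q - 1) * (q ^ m / d) := mul_div_assoc _ _ _

lemma tsum_one_sub_one_sub_inv_pow_sub_natCast (hq : 1 < q) (d m : ℕ) :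
    ∑' v : ℕ, (1 - (1 - q⁻¹ ^ (v + 1)) ^ d) - m =
      ∑' v : ℕ, (1 - (1 - q⁻¹ ^ (v + (m + 1))) ^ d) -
        ∑ v ∈ range m, (1 - q⁻¹ ^ (v + 1)) ^ d := by
  rw [← (summable_one_sub_one_sub_inv_pow hq d 1).sum_add_tsum_nat_add m]
  simp only [sum_sub_distrib, sum_const, card_range, nsmul_eq_mul, mul_one, add_assoc]
  ring

lemma tsum_one_sub_one_sub_inv_pow_lt_rpow (hq : 1 < q) {d m : ℕ} (hd : 1 ≤ d) {D : ℝ}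
    (hD : D ≤ logb q d - m) (hD' : D ≤ m + 1 - logb q d) :
    ∑' v : ℕ, (1 - (1 - q⁻¹ ^ (v + (m + 1))) ^ d) < q / (q - 1) * q ^ (-D) := by
  have hexp : (d : ℝ) * q⁻¹ ^ (m + 1) = q ^ (logb q d - (m + 1 : ℕ)) :=
    mul_inv_pow_eq_rpow_logb_sub (by linarith) hq.ne' (by exact_mod_cast hd) (m + 1)
  rcases hd.eq_or_lt with rfl | hd2
  -- For `d = 1` Bernoulli is an equality, but then `logb q d = 0` leaves room in the exponent.
  · calc _ ≤ q / (q - 1) * ((1 : ℕ) * q⁻¹ ^ (m + 1)) :=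
          tsum_one_sub_one_sub_inv_pow_le hq 1 _
      _ < _ := by
        rw [hexp]
        refine mul_lt_mul_of_pos_left (rpow_lt_rpow_of_exponent_lt hq ?_) (by positivity)
        simp only [Nat.cast_one, logb_one] at hD ⊢
        push_cast
        linarith
  · calc _ < q / (q - 1) * (d * q⁻¹ ^ (m + 1)) := tsum_one_sub_one_sub_inv_pow_lt hq hd2 _
      _ ≤ _ := by
        rw [hexp]
        gcongr
        · exact hq.le
        · push_cast
          linarith

lemma sum_one_sub_inv_pow_pow_lt_rpow (hq : 1 < q) {d m : ℕ} (hd : 1 ≤ d) {D : ℝ}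
    (hD : D ≤ logb q d - m) :
    ∑ v ∈ range m, (1 - q⁻¹ ^ (v + 1)) ^ d < q / (q - 1) * q ^ (-D) := by
  calc _ < q / (q - 1) * (q ^ m / d) := sum_one_sub_inv_pow_pow_lt hq hd m
    _ = q / (q - 1) * q ^ ((m : ℝ) - logb q d) := by
      rw [pow_div_eq_rpow_sub_logb (by linarith) hq.ne' (by exact_mod_cast hd)]
    _ ≤ _ := by
      gcongr
      · exact hq.le
      · linarith

end

/-- `|E(q,d) - ⌊log_q d⌋| < q/(q-1) · q^{-dist(log_q d, ℕ)}`. -/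
theorem stmt4 (q : ℕ) (hq : 2 ≤ q) (d : ℕ) (hd : 1 ≤ d) :
    |(∑' v : ℕ, (1 - (1 - (q : ℝ)⁻¹ ^ (v + 1)) ^ d)) - (⌊Real.logb q d⌋ : ℝ)| <
      (q : ℝ) / ((q : ℝ) - 1) *
        (q : ℝ) ^ (-(Metric.infDist (Real.logb q d) (Set.range (Nat.cast : ℕ → ℝ)))) := by
  have hq1 : (1 : ℝ) < q := by exact_mod_cast hq
  have hx : 0 ≤ logb q d := logb_nonneg hq1 (by exact_mod_cast hd)
  obtain ⟨hD, hD'⟩ := infDist_range_natCast_le hx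
  rw [← natCast_floor_eq_intCast_floor hx, tsum_one_sub_one_sub_inv_pow_sub_natCast hq1]
  exact abs_sub_lt_of_nonneg_of_lt
    (tsum_nonneg fun v =>
      one_sub_one_sub_pow_nonneg (by positivity) (inv_pow_le_one_of_one_le hq1.le _) d)
    (tsum_one_sub_one_sub_inv_pow_lt_rpow hq1 hd hD hD')
    (sum_nonneg fun v _ => pow_nonneg (sub_nonneg.2 (inv_pow_le_one_of_one_le hq1.le _)) d)
    (sum_one_sub_inv_pow_pow_lt_rpow hq1 hd hD)
end

section
/- Let $W_1, \ldots, W_n$ be mutually independent random variables taking values in $\mathbb{N}$, where $W_i$ is geometric of parameter $1-q^{-i}$ (i.e., $\mathbb{P}[W_i = v] = (1-q^{-i}) q^{-iv}$ for all $v \in \mathbb{N}$). Then for every integer $v \geq 0$, $\mathbb{P}[W_1 + \cdots + W_n \leq v] = (1-q^{-v-1})(1-q^{-v-2}) \cdots (1-q^{-v-n})$. -/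
/-!
Conditioning on the last variable, `S_{k+1} = S_k + W_{k+1}` with `W_{k+1}` independent of `S_k`,
so `ℙ[S_{k+1} ≤ v]` is the convolution of `ℙ[S_k ≤ ·]` with a geometric law of ratio
`a = c^(k+1)`, where `c = q⁻¹`. The product `F_k(v) = ∏_{i<k} (1 - c^(v+i+1))` solves this
recursion because `F_{k+1}(v+1) = a F_{k+1}(v) + (1 - a) F_k(v+1)`.
-/

open MeasureTheory ProbabilityTheory Finset

theorem sum_antidiagonal_prod_one_sub_pow_mul_geom {R : Type*} [CommRing R] (c : R) (k v : ℕ) :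
    ∑ p ∈ antidiagonal v,
        (∏ i ∈ range k, (1 - c ^ (p.1 + i + 1))) * ((1 - c ^ (k + 1)) * (c ^ (k + 1)) ^ p.2) =
      ∏ i ∈ range (k + 1), (1 - c ^ (v + i + 1)) := by
  induction v with
  | zero => simp [prod_range_succ]
  | succ v ih =>
    have shift : ∀ u, ∏ i ∈ range (k + 1), (1 - c ^ (u + i + 1)) =
        (1 - c ^ (u + 1)) * ∏ i ∈ range k, (1 - c ^ (u + 1 + i + 1)) := fun u => by
      rw [prod_range_succ', mul_comm]
      simp only [add_assoc, add_left_comm _ 1, add_zero]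
    have term_succ : ∀ p : ℕ × ℕ,
        (∏ i ∈ range k, (1 - c ^ (p.1 + i + 1))) * ((1 - c ^ (k + 1)) * (c ^ (k + 1)) ^ (p.2 + 1)) =
          c ^ (k + 1) * ((∏ i ∈ range k, (1 - c ^ (p.1 + i + 1))) *
            ((1 - c ^ (k + 1)) * (c ^ (k + 1)) ^ p.2)) :=
      fun p => by ring
    rw [Nat.sum_antidiagonal_succ', sum_congr rfl fun p _ => term_succ p, ← mul_sum, ih,
      shift v, prod_range_succ, pow_zero, mul_one,
      show c ^ (v + 1 + k + 1) = c ^ (k + 1) * c ^ (v + 1) by ring]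
    ring

theorem measure_add_le_eq_sum_antidiagonal {Ω : Type*} [MeasurableSpace Ω] {μ : Measure Ω}
    {X Y : Ω → ℕ} (hX : Measurable X) (hY : Measurable Y) (hXY : IndepFun X Y μ) (v : ℕ) :
    μ {ω | X ω + Y ω ≤ v} = ∑ p ∈ antidiagonal v, μ {ω | X ω ≤ p.1} * μ {ω | Y ω = p.2} := by
  have hunion : {ω | X ω + Y ω ≤ v} =
      ⋃ p ∈ antidiagonal v, {ω | X ω ≤ p.1} ∩ {ω | Y ω = p.2} := by
    ext ω
    simp only [Set.mem_ofPred_eq, Set.mem_iUnion, Set.mem_inter_iff,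
      HasAntidiagonal.mem_antidiagonal, exists_prop, Prod.exists]
    constructor
    · intro h
      exact ⟨v - Y ω, Y ω, by omega, by omega, rfl⟩
    · rintro ⟨a, b, rfl, ha, rfl⟩
      omega
  have hdisj : (antidiagonal v : Set (ℕ × ℕ)).PairwiseDisjoint
      fun p => {ω | X ω ≤ p.1} ∩ {ω | Y ω = p.2} := by
    intro p hp p' hp' hne
    refine Set.disjoint_left.mpr fun ω ⟨_, hω⟩ ⟨_, hω'⟩ => hne ?_
    have h2 : p.2 = p'.2 := hω.symm.trans hω'
    have := HasAntidiagonal.mem_antidiagonal.mp hp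
    have := HasAntidiagonal.mem_antidiagonal.mp hp'
    exact Prod.ext (by omega) h2
  rw [hunion, measure_biUnion_finset hdisj fun p _ =>
    (hX measurableSet_Iic).inter (hY (measurableSet_singleton _))]
  exact sum_congr rfl fun p _ =>
    hXY.measure_inter_preimage_eq_mul _ _ measurableSet_Iic (measurableSet_singleton _)

theorem ProbabilityTheory.iIndepFun.indepFun_sum_castSucc_last {Ω β : Type*}
    [MeasurableSpace Ω] {μ : Measure Ω} [MeasurableSpace β] [AddCommMonoid β] [MeasurableAdd₂ β]
    {n : ℕ} {W : Fin (n + 1) → Ω → β}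
    (hmeas : ∀ i, Measurable (W i)) (hindep : iIndepFun W μ) :
    IndepFun (fun ω => ∑ i : Fin n, W i.castSucc ω) (W (Fin.last n)) μ := by
  have h := hindep.indepFun_finsetSum_of_notMem hmeas (s := univ.map Fin.castSuccEmb)
    (i := Fin.last n) (by simp)
  convert h using 1
  ext ω
  simp [Finset.sum_apply]

theorem measure_sum_le_eq_prod_of_geometric {Ω : Type*} [MeasurableSpace Ω] {μ : Measure Ω}
    [IsProbabilityMeasure μ] (c : ℝ) {n : ℕ} {W : Fin n → Ω → ℕ} (hmeas : ∀ i, Measurable (W i))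
    (hindep : iIndepFun W μ)
    (hlaw : ∀ i v, (μ {ω | W i ω = v}).toReal = (1 - c ^ ((i : ℕ) + 1)) * (c ^ ((i : ℕ) + 1)) ^ v)
    (v : ℕ) :
    (μ {ω | ∑ i, W i ω ≤ v}).toReal = ∏ i ∈ range n, (1 - c ^ (v + i + 1)) := by
  induction n generalizing v with
  | zero => simp
  | succ n ih =>
    simp only [Fin.sum_univ_castSucc]
    rw [measure_add_le_eq_sum_antidiagonal
      (Finset.measurable_fun_sum _ fun i _ => hmeas _) (hmeas _)
      (hindep.indepFun_sum_castSucc_last hmeas), ENNReal.toReal_sum fun _ _ => by finiteness,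
      ← sum_antidiagonal_prod_one_sub_pow_mul_geom]
    refine sum_congr rfl fun p _ => ?_
    rw [ENNReal.toReal_mul, hlaw, Fin.val_last,
      ih (fun i => hmeas _) (hindep.precomp (Fin.castSucc_injective n)) (fun i => hlaw _)]

theorem stmt5_general {Ω : Type*} [MeasurableSpace Ω] (μ : Measure Ω) [IsProbabilityMeasure μ]
    (q n : ℕ)
    (W : Fin n → Ω → ℕ) (hmeas : ∀ i, Measurable (W i))
    (hindep : iIndepFun W μ)
    (hlaw : ∀ i : Fin n, ∀ v : ℕ,
      (μ {ω | W i ω = v}).toReal =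
        (1 - (q : ℝ)⁻¹ ^ ((i : ℕ) + 1)) * ((q : ℝ)⁻¹ ^ ((i : ℕ) + 1)) ^ v)
    (v : ℕ) :
    (μ {ω | ∑ i, W i ω ≤ v}).toReal =
      ∏ i : Fin n, (1 - (q : ℝ)⁻¹ ^ (v + (i : ℕ) + 1)) := by
  rw [measure_sum_le_eq_prod_of_geometric _ hmeas hindep hlaw v,
    Fin.prod_univ_eq_prod_range fun i => 1 - (q : ℝ)⁻¹ ^ (v + i + 1)]

/-- Sum of independent geometric variables `W_i` of parameter `1-q^{-i}` (`i = 1,…,n`):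
`ℙ[W_1+⋯+W_n ≤ v] = ∏_{i=1}^n (1-q^{-v-i})`. -/
theorem stmt5 {Ω : Type*} [MeasurableSpace Ω] (μ : Measure Ω) [IsProbabilityMeasure μ]
    (q n : ℕ) (hq : 2 ≤ q) (hn : 1 ≤ n)
    (W : Fin n → Ω → ℕ) (hmeas : ∀ i, Measurable (W i))
    (hindep : iIndepFun W μ)
    (hlaw : ∀ i : Fin n, ∀ v : ℕ,
      (μ {ω | W i ω = v}).toReal =
        (1 - (q : ℝ)⁻¹ ^ ((i : ℕ) + 1)) * ((q : ℝ)⁻¹ ^ ((i : ℕ) + 1)) ^ v)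
    (v : ℕ) :
    (μ {ω | ∑ i, W i ω ≤ v}).toReal =
      ∏ i : Fin n, (1 - (q : ℝ)⁻¹ ^ (v + (i : ℕ) + 1)) :=
  stmt5_general μ q n W hmeas hindep hlaw v
end

section
/- Define $\Pi(q) = q \cdot \prod_{i=1}^{\infty} (1-q^{-i})$ for an integer $q \geq 2$. Then $q - 1 - \frac{1}{q-1} < \Pi(q) < q-1$. -/
/-!
Put `x = 1/q`, so that `Π(q) = q ∏_{i ≥ 1} (1 - x^i)`. All factors lie in `[0, 1]`, so dropping
those with `i ≥ 3` gives `Π(q) ≤ q (1 - x) (1 - x²) < q (1 - x) = q - 1`. The Weierstrass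
inequality `∏ (1 - aᵢ) ≥ 1 - ∑ aᵢ` applied to the factors with `i ≥ 2` gives
`Π(q) ≥ q (1 - x) (1 - x² / (1 - x)) = q - 1 - 1/q > q - 1 - 1/(q - 1)`.
-/

open Finset

theorem Finset.one_sub_sum_le_prod_one_sub {ι R : Type*} [CommRing R] [PartialOrder R]
    [IsOrderedRing R] (s : Finset ι) {f : ι → R} (h0 : ∀ i ∈ s, 0 ≤ f i)
    (h1 : ∀ i ∈ s, f i ≤ 1) : 1 - ∑ i ∈ s, f i ≤ ∏ i ∈ s, (1 - f i) := by
  induction s using Finset.cons_induction with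
  | empty => simp
  | cons a s ha ih =>
    rw [sum_cons, prod_cons]
    have ha0 : 0 ≤ f a := h0 a (mem_cons_self a s)
    have ha1 : 0 ≤ 1 - f a := sub_nonneg.2 (h1 a (mem_cons_self a s))
    have hs0 : 0 ≤ ∑ i ∈ s, f i := sum_nonneg fun i hi => h0 i (mem_cons_of_mem hi)
    have ih := ih (fun i hi => h0 i (mem_cons_of_mem hi)) (fun i hi => h1 i (mem_cons_of_mem hi))
    calc 1 - (f a + ∑ i ∈ s, f i)
        ≤ 1 - (f a + ∑ i ∈ s, f i) + f a * ∑ i ∈ s, f i :=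
          le_add_of_nonneg_right (mul_nonneg ha0 hs0)
      _ = (1 - f a) * (1 - ∑ i ∈ s, f i) := by ring
      _ ≤ (1 - f a) * ∏ i ∈ s, (1 - f i) := mul_le_mul_of_nonneg_left ih ha1

namespace Real

variable {ι : Type*} {f : ι → ℝ}

theorem multipliable_one_sub_of_summable (hf : Summable f) : Multipliable fun i => 1 - f i := by
  simpa [sub_eq_add_neg] using
    multipliable_one_add_of_summable (f := fun i => -f i) (by simpa using hf.abs)

theorem tprod_one_sub_le_one (h0 : ∀ i, 0 ≤ f i) (h1 : ∀ i, f i ≤ 1) :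
    ∏' i, (1 - f i) ≤ 1 := by
  by_cases hf : Multipliable fun i => 1 - f i
  · exact le_of_tendsto' hf.hasProd fun s =>
      prod_le_one (fun i _ => sub_nonneg.2 (h1 i)) fun i _ => sub_le_self 1 (h0 i)
  · rw [tprod_eq_one_of_not_multipliable hf]

theorem one_sub_tsum_le_tprod_one_sub (h0 : ∀ i, 0 ≤ f i) (h1 : ∀ i, f i ≤ 1)
    (hf : Summable f) : 1 - ∑' i, f i ≤ ∏' i, (1 - f i) :=
  ge_of_tendsto' (multipliable_one_sub_of_summable hf).hasProd fun s =>
    (sub_le_sub_left (hf.sum_le_tsum s fun i _ => h0 i) 1).trans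
      (s.one_sub_sum_le_prod_one_sub (fun i _ => h0 i) fun i _ => h1 i)

end Real

section

variable {x : ℝ}

theorem summable_pow_add (hx0 : 0 ≤ x) (hx1 : x < 1) (k : ℕ) :
    Summable fun i => x ^ (i + k) := by
  simpa [pow_add] using (summable_geometric_of_lt_one hx0 hx1).mul_right (x ^ k)

theorem tsum_pow_add (hx0 : 0 ≤ x) (hx1 : x < 1) (k : ℕ) :
    ∑' i, x ^ (i + k) = x ^ k / (1 - x) := by
  simp_rw [pow_add, tsum_mul_right, tsum_geometric_of_lt_one hx0 hx1]
  ring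

theorem multipliable_one_sub_pow_add (hx0 : 0 ≤ x) (hx1 : x < 1) (k : ℕ) :
    Multipliable fun i => 1 - x ^ (i + k) :=
  Real.multipliable_one_sub_of_summable (summable_pow_add hx0 hx1 k)

theorem tprod_one_sub_pow_eq_prod_range_mul (hx0 : 0 ≤ x) (hx1 : x < 1) (k : ℕ) :
    ∏' i, (1 - x ^ (i + 1)) =
      (∏ i ∈ range k, (1 - x ^ (i + 1))) * ∏' i, (1 - x ^ (i + k + 1)) :=
  (Multipliable.prod_mul_tprod_nat_mul' (f := fun i => 1 - x ^ (i + 1))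
    (by simpa only [add_assoc] using multipliable_one_sub_pow_add hx0 hx1 (k + 1))).symm

theorem one_sub_sub_sq_le_tprod_one_sub_pow (hx0 : 0 ≤ x) (hx1 : x < 1) :
    1 - x - x ^ 2 ≤ ∏' i, (1 - x ^ (i + 1)) := by
  have htail : 1 - x ^ 2 / (1 - x) ≤ ∏' i, (1 - x ^ (i + 2)) := by
    rw [← tsum_pow_add hx0 hx1]
    exact Real.one_sub_tsum_le_tprod_one_sub (fun i => pow_nonneg hx0 _)
      (fun i => pow_le_one₀ hx0 hx1.le) (summable_pow_add hx0 hx1 2)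
  rw [tprod_one_sub_pow_eq_prod_range_mul hx0 hx1 1, prod_range_one]
  norm_num only [zero_add, pow_one, add_assoc]
  calc 1 - x - x ^ 2 = (1 - x) * (1 - x ^ 2 / (1 - x)) := by field_simp [(sub_pos.2 hx1).ne']
    _ ≤ (1 - x) * ∏' i, (1 - x ^ (i + 2)) :=
      mul_le_mul_of_nonneg_left htail (sub_nonneg.2 hx1.le)

theorem tprod_one_sub_pow_le (hx0 : 0 ≤ x) (hx1 : x < 1) :
    ∏' i, (1 - x ^ (i + 1)) ≤ (1 - x) * (1 - x ^ 2) := by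
  rw [tprod_one_sub_pow_eq_prod_range_mul hx0 hx1 2]
  norm_num only [prod_range_succ, prod_range_zero, one_mul, zero_add, pow_one, add_assoc]
  refine mul_le_of_le_one_right ?_ (Real.tprod_one_sub_le_one (fun i => pow_nonneg hx0 _)
    fun i => pow_le_one₀ hx0 hx1.le)
  exact mul_nonneg (sub_nonneg.2 hx1.le) (sub_nonneg.2 (pow_le_one₀ hx0 hx1.le))

end

/-- `q-1-1/(q-1) < Π(q) = q·∏_{i≥1}(1-q^{-i}) < q-1`. -/
theorem stmt8 (q : ℕ) (hq : 2 ≤ q) :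
    (q : ℝ) - 1 - 1 / ((q : ℝ) - 1) < (q : ℝ) * ∏' i : ℕ, (1 - (q : ℝ)⁻¹ ^ (i + 1)) ∧
      (q : ℝ) * ∏' i : ℕ, (1 - (q : ℝ)⁻¹ ^ (i + 1)) < (q : ℝ) - 1 := by
  have hq2 : (2 : ℝ) ≤ q := by exact_mod_cast hq
  have hx0 : 0 ≤ (q : ℝ)⁻¹ := by positivity
  have hx1 : (q : ℝ)⁻¹ < 1 := inv_lt_one_of_one_lt₀ (by linarith)
  constructor
  · calc (q : ℝ) - 1 - 1 / ((q : ℝ) - 1) < q - 1 - 1 / q := by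
          gcongr <;> linarith
      _ = q * (1 - (q : ℝ)⁻¹ - (q : ℝ)⁻¹ ^ 2) := by field_simp
      _ ≤ q * ∏' i : ℕ, (1 - (q : ℝ)⁻¹ ^ (i + 1)) :=
        mul_le_mul_of_nonneg_left (one_sub_sub_sq_le_tprod_one_sub_pow hx0 hx1) (by positivity)
  · calc (q : ℝ) * ∏' i : ℕ, (1 - (q : ℝ)⁻¹ ^ (i + 1))
        ≤ q * ((1 - (q : ℝ)⁻¹) * (1 - (q : ℝ)⁻¹ ^ 2)) :=
          mul_le_mul_of_nonneg_left (tprod_one_sub_pow_le hx0 hx1) (by positivity)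
      _ = (q - 1) * (1 - (q : ℝ)⁻¹ ^ 2) := by field_simp
      _ < q - 1 := mul_lt_of_lt_one_right (by linarith) (by simp; positivity)
end

section
/- Let $R$ be a complete discrete valuation ring with uniformizer $\pi$, $\tilde{K}$ a finite extension of its fraction field $K$ with ring of integers $\tilde{R}$, and let $f : \tilde{R}^d \to \tilde{R}^r$ be a surjective $\tilde{R}$-linear map. Then for every nonnegative integer $v$, the Haar-measure probability that a uniformly random $x \in R^d$ satisfies $f(x) \in \pi^v \tilde{R}^r$ is at most $q^{-rv}$, where $q$ is the cardinality of the residue field of $R$. -/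
/-!
Let `G n ⊆ R^d` be the subgroup of those `x` with `f x ∈ π^n R̃^r`. It contains the open subgroup
`π^n R^d`, so it is open, of finite index, and of Haar measure `1 / [R^d : G n]`; it therefore
suffices to show `[G n : G (n+1)] ≥ q^r`. Fix a maximal ideal `P` of `R̃` over the maximal ideal
of `R`, and let `ρ x` be the residue of `f x` in `(R̃/P)^r`. If `π^n x ∈ G (n+1)` then `ρ x = 0`,
so `[G n : G (n+1)] ≥ |ρ(R^d)|`. As `f` is surjective, the `k`-space `ρ(R^d)` spans `(R̃/P)^r`
over `R̃/P`, so its `k`-dimension is at least `r` and it has at least `q^r` elements.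
-/

open MeasureTheory Submodule
open scoped ENNReal

namespace AddSubgroup

variable {G : Type*} [AddGroup G]

theorem pow_le_index_of_le_relIndex {H : ℕ → AddSubgroup G} (h0 : H 0 = ⊤)
    (hle : ∀ n, H (n + 1) ≤ H n) {c : ℕ} (hc : ∀ n, c ≤ (H (n + 1)).relIndex (H n)) (v : ℕ) :
    c ^ v ≤ (H v).index := by
  induction v with
  | zero => simp [h0]
  | succ v ih =>
    rw [← relIndex_mul_index (hle v), pow_succ']
    exact Nat.mul_le_mul (hc v) ih

theorem card_range_le_relIndex {A B : Type*} [AddGroup A] [AddGroup B] {H K : AddSubgroup G}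
    [H.FiniteIndex] (m : A →+ G) (hm : m.range ≤ K) (ρ : A →+ B) (hρ : H.comap m ≤ ρ.ker) :
    Nat.card ρ.range ≤ H.relIndex K := by
  have := isFiniteRelIndex_of_finiteIndex (H := H) (K := m.range)
  have := isFiniteRelIndex_of_finiteIndex (H := H) (K := K)
  calc Nat.card ρ.range = ρ.ker.index := (index_ker ρ).symm
    _ ≤ (H.comap m).index :=
      Nat.le_of_dvd (by rw [index_comap]; exact Nat.pos_of_ne_zero relIndex_ne_zero)
        (index_dvd_of_le hρ)
    _ = H.relIndex m.range := index_comap H m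
    _ ≤ H.relIndex K := relIndex_le_of_le_right hm relIndex_ne_zero

theorem finiteIndex_of_isOpen [TopologicalSpace G] [IsTopologicalAddGroup G] [CompactSpace G]
    {H : AddSubgroup G} (hH : IsOpen (H : Set G)) : H.FiniteIndex :=
  have := quotient_finite_of_isOpen H hH
  finiteIndex_of_finite_quotient

variable [MeasurableSpace G] [MeasurableAdd G]

theorem measurableSet_of_le {B H : AddSubgroup G} [B.FiniteIndex]
    (hB : MeasurableSet (B : Set G)) (hBH : B ≤ H) : MeasurableSet (H : Set G) := by
  have hfiber (q : G ⧸ B) : MeasurableSet (QuotientAddGroup.mk ⁻¹' {q}) := by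
    induction q using QuotientAddGroup.induction_on with | H y => ?_
    rw [← Set.image_singleton, QuotientAddGroup.preimage_image_mk_eq_add, Set.singleton_add]
    exact hB.const_vadd y
  have hsat : (H : Set G) = (QuotientAddGroup.mk : G → G ⧸ B) ⁻¹' (QuotientAddGroup.mk '' H) := by
    rw [QuotientAddGroup.preimage_image_mk_eq_add]
    exact (Set.subset_add_left _ B.zero_mem).antisymm
      ((Set.add_subset_add_left hBH).trans_eq (coe_add_coe H))
  rw [hsat, ← Set.biUnion_preimage_singleton]
  exact (Set.toFinite _).measurableSet_biUnion fun q _ => hfiber q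

theorem measure_eq_inv_index (μ : Measure G) [μ.IsAddLeftInvariant] [IsProbabilityMeasure μ]
    (H : AddSubgroup G) [H.FiniteIndex] (hH : MeasurableSet (H : Set G)) :
    μ H = (H.index : ℝ≥0∞)⁻¹ := by
  have := H.index_mul_measure hH μ
  rw [measure_univ] at this
  exact ENNReal.eq_inv_of_mul_eq_one_left (by rwa [mul_comm])

end AddSubgroup

namespace Submodule

open Module

variable {k K N : Type*} [Field k] [Field K] [Algebra k K] [AddCommGroup N] [Module K N]
  [Module k N] [IsScalarTower k K N]

theorem finrank_le_finrank_of_span_eq_top (V : Submodule k N) [FiniteDimensional k V]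
    (hV : span K (V : Set N) = ⊤) : finrank K N ≤ finrank k V := by
  let b := finBasis k V
  have hspan : span K (Set.range (V.subtype ∘ b)) = ⊤ := by
    rw [← span_span_of_tower k, Set.range_comp, ← map_span, b.span_eq, Submodule.map_top,
      range_subtype, hV]
  calc finrank K N = finrank K (⊤ : Submodule K N) := (finrank_top K N).symm
    _ = finrank K (span K (Set.range (V.subtype ∘ b))) := by rw [hspan]
    _ ≤ Fintype.card (Fin (finrank k V)) := finrank_range_le_card _
    _ = finrank k V := Fintype.card_fin _

theorem card_pow_finrank_le_card_of_span_eq_top [Finite k] (V : Submodule k N)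
    [FiniteDimensional k V] (hV : span K (V : Set N) = ⊤) :
    Nat.card k ^ finrank K N ≤ Nat.card V := by
  have := Fintype.ofFinite k
  have := Module.finite_of_finite k (M := V)
  have := Fintype.ofFinite V
  rw [Nat.card_eq_fintype_card, Nat.card_eq_fintype_card, card_eq_pow_finrank (K := k) (V := V)]
  exact Nat.pow_le_pow_right Fintype.card_pos (finrank_le_finrank_of_span_eq_top V hV)

end Submodule

namespace LinearMap

variable {R Rt M : Type*} [CommRing R] [CommRing Rt] [Algebra R Rt] [AddCommGroup M] [Module R M]
  {r : ℕ}

theorem span_range_algebraLinearMap_compLeft (ι : Type*) [Finite ι] :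
    span Rt (Set.range ((Algebra.linearMap R Rt).compLeft ι)) = ⊤ := by
  classical
  rw [eq_top_iff, ← (Pi.basisFun Rt ι).span_eq]
  refine span_mono ?_
  rintro _ ⟨j, rfl⟩
  refine ⟨Pi.single j 1, funext fun i => ?_⟩
  simp [Pi.single_apply, apply_ite (algebraMap R Rt)]

theorem span_range_restrictScalars_comp_compLeft {ι : Type*} [Finite ι] [Module Rt M]
    [IsScalarTower R Rt M] (f : (ι → Rt) →ₗ[Rt] M) (hf : Function.Surjective f) :
    span Rt (Set.range (f.restrictScalars R ∘ₗ (Algebra.linearMap R Rt).compLeft ι)) = ⊤ := by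
  rw [coe_comp, coe_restrictScalars, Set.range_comp, ← Submodule.map_span,
    span_range_algebraLinearMap_compLeft, Submodule.map_top, range_eq_top.mpr hf]

def preimageSpanPow (F : M →ₗ[R] Fin r → Rt) (a : R) (n : ℕ) : Submodule R M :=
  (Submodule.pi Set.univ fun _ => (Ideal.span {algebraMap R Rt a ^ n}).restrictScalars R).comap F

variable (F : M →ₗ[R] Fin r → Rt) (a : R)

theorem mem_preimageSpanPow {n : ℕ} {x : M} :
    x ∈ F.preimageSpanPow a n ↔ ∀ i, F x i ∈ Ideal.span {algebraMap R Rt a ^ n} := by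
  simp [preimageSpanPow]

theorem preimageSpanPow_zero : F.preimageSpanPow a 0 = ⊤ := by
  ext x
  simp [mem_preimageSpanPow]

theorem preimageSpanPow_succ_le (n : ℕ) :
    F.preimageSpanPow a (n + 1) ≤ F.preimageSpanPow a n := by
  intro x hx
  rw [mem_preimageSpanPow] at hx ⊢
  exact fun i => Ideal.span_singleton_le_span_singleton.mpr (pow_dvd_pow _ n.le_succ) (hx i)

theorem pow_smul_mem_preimageSpanPow (n : ℕ) (x : M) : a ^ n • x ∈ F.preimageSpanPow a n := by
  rw [mem_preimageSpanPow]
  intro i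
  rw [map_smul, Pi.smul_apply, Algebra.smul_def, map_pow]
  exact Ideal.mul_mem_right _ _ (Ideal.mem_span_singleton_self _)

theorem mem_preimageSpanPow_of_pow_smul_mem [IsDomain Rt] (ha : algebraMap R Rt a ≠ 0)
    {n m : ℕ} {x : M} (hx : a ^ n • x ∈ F.preimageSpanPow a (n + m)) :
    x ∈ F.preimageSpanPow a m := by
  rw [mem_preimageSpanPow] at hx ⊢
  intro i
  have := hx i
  rw [map_smul, Pi.smul_apply, Algebra.smul_def, map_pow, Ideal.mem_span_singleton, pow_add] at this
  exact Ideal.mem_span_singleton.mpr ((mul_dvd_mul_iff_left (pow_ne_zero n ha)).mp this)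

theorem pi_span_pow_le_preimageSpanPow {ι : Type*} (F : (ι → R) →ₗ[R] Fin r → Rt) (n : ℕ) :
    Submodule.pi Set.univ (fun _ => Ideal.span {a} ^ n) ≤ F.preimageSpanPow a n := by
  intro x hx
  choose c hc using fun j =>
    Ideal.mem_span_singleton.mp (Ideal.span_singleton_pow a n ▸ mem_pi.mp hx j trivial)
  have : x = a ^ n • c := funext hc
  exact this ▸ F.pow_smul_mem_preimageSpanPow a n c

theorem card_pow_le_relIndex_preimageSpanPow [IsDomain Rt] [Module.Finite R Rt]
    {p : Ideal R} [p.IsMaximal] [Finite (R ⧸ p)] (P : Ideal Rt) [P.IsMaximal] [P.LiesOver p]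
    (hF : span Rt (Set.range F) = ⊤) (hap : a ∈ p) (ha : algebraMap R Rt a ≠ 0) (n : ℕ)
    [(F.preimageSpanPow a (n + 1)).toAddSubgroup.FiniteIndex] :
    Nat.card (R ⧸ p) ^ r ≤ (F.preimageSpanPow a (n + 1)).toAddSubgroup.relIndex
      (F.preimageSpanPow a n).toAddSubgroup := by
  let _ := Ideal.Quotient.field p
  let _ := Ideal.Quotient.field P
  let g : (Fin r → Rt) →ₗ[Rt] Fin r → Rt ⧸ P :=
    (Ideal.Quotient.mkₐ Rt P).toLinearMap.compLeft (Fin r)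
  let ρ : M →ₗ[R] Fin r → Rt ⧸ P := g.restrictScalars R ∘ₗ F
  have hρ : span (Rt ⧸ P) (Set.range ρ) = ⊤ := by
    refine span_eq_top_of_span_eq_top Rt _ _ ?_
    rw [coe_comp, coe_restrictScalars, Set.range_comp, ← Submodule.map_span, hF,
      Submodule.map_top, range_eq_top]
    exact Ideal.Quotient.mk_surjective.comp_left
  have hcard : Nat.card (R ⧸ p) ^ r ≤ Nat.card (range ρ) := by
    have hrange : (span (R ⧸ p) (Set.range ρ)).restrictScalars R = range ρ := by
      rw [restrictScalars_span R (R ⧸ p) Ideal.Quotient.mk_surjective, ← coe_range, span_eq]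
    calc Nat.card (R ⧸ p) ^ r
        = Nat.card (R ⧸ p) ^ Module.finrank (Rt ⧸ P) (Fin r → Rt ⧸ P) := by
          rw [Module.finrank_fin_fun]
      _ ≤ Nat.card (span (R ⧸ p) (Set.range ρ)) :=
          card_pow_finrank_le_card_of_span_eq_top _ (by rwa [span_span_of_tower])
      _ = Nat.card ((span (R ⧸ p) (Set.range ρ)).restrictScalars R) := rfl
      _ = Nat.card (range ρ) := by rw [hrange]
  -- `x ↦ a^n • x` lands in level `n`, and `ρ x` is the residue of `F (a^n • x) / a^n`.
  refine hcard.trans (AddSubgroup.card_range_le_relIndex (DistribSMul.toAddMonoidHom M (a ^ n))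
    ?_ ρ.toAddMonoidHom ?_)
  · rintro _ ⟨x, rfl⟩
    exact F.pow_smul_mem_preimageSpanPow a n x
  · intro x hx
    have hx1 := F.mem_preimageSpanPow_of_pow_smul_mem a ha (m := 1) hx
    rw [mem_preimageSpanPow, pow_one] at hx1
    have haP : algebraMap R Rt a ∈ P := (Ideal.mem_of_liesOver P p a).mp hap
    funext i
    exact Ideal.Quotient.eq_zero_iff_mem.mpr ((Ideal.span_singleton_le_iff_mem P).mpr haP (hx1 i))

theorem card_pow_mul_le_index_preimageSpanPow [IsDomain Rt] [Module.Finite R Rt]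
    (hinj : Function.Injective (algebraMap R Rt)) {p : Ideal R} [p.IsMaximal] [Finite (R ⧸ p)]
    (hF : span Rt (Set.range F) = ⊤) (hap : a ∈ p) (ha : a ≠ 0)
    (hfin : ∀ n, (F.preimageSpanPow a n).toAddSubgroup.FiniteIndex) (v : ℕ) :
    Nat.card (R ⧸ p) ^ (r * v) ≤ (F.preimageSpanPow a v).toAddSubgroup.index := by
  have := (faithfulSMul_iff_algebraMap_injective R Rt).mpr hinj
  obtain ⟨P, _, _⟩ := Ideal.exists_maximal_ideal_liesOver_of_isIntegral (S := Rt) p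
  rw [pow_mul]
  exact AddSubgroup.pow_le_index_of_le_relIndex (by simp [preimageSpanPow_zero])
    (F.preimageSpanPow_succ_le a) (fun n => F.card_pow_le_relIndex_preimageSpanPow a P hF hap
      ((map_ne_zero_iff _ hinj).mpr ha) n) v

end LinearMap

theorem stmt11_general {R : Type*} [CommRing R] [IsDomain R] [IsDiscreteValuationRing R]
    [TopologicalSpace R] [IsTopologicalRing R] [CompactSpace R]
    [MeasurableSpace R] [BorelSpace R]
    [Finite (R ⧸ IsLocalRing.maximalIdeal R)]
    (π : R) (hπ : Irreducible π)
    (hopen : ∀ n : ℕ, IsOpen ((Ideal.span {π} ^ n : Ideal R) : Set R))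
    {Rt : Type*} [CommRing Rt] [IsDomain Rt]
    [Algebra R Rt] [Module.Finite R Rt]
    (hinj : Function.Injective (algebraMap R Rt))
    {d r : ℕ}
    (μ : Measure (Fin d → R)) [μ.IsAddHaarMeasure] [IsProbabilityMeasure μ]
    (f : (Fin d → Rt) →ₗ[Rt] (Fin r → Rt)) (hf : Function.Surjective f)
    (v : ℕ) :
    (μ {x | ∀ i, f (fun j => algebraMap R Rt (x j)) i ∈
        Ideal.span {algebraMap R Rt π ^ v}}).toReal ≤
      ((Nat.card (R ⧸ IsLocalRing.maximalIdeal R) : ℝ))⁻¹ ^ (r * v) := by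
  let F := f.restrictScalars R ∘ₗ (Algebra.linearMap R Rt).compLeft (Fin d)
  let box (n : ℕ) : AddSubgroup (Fin d → R) :=
    (Submodule.pi Set.univ fun _ => Ideal.span {π} ^ n).toAddSubgroup
  have hbox_coe (n : ℕ) : (box n : Set (Fin d → R)) = Set.univ.pi fun _ => ↑(Ideal.span {π} ^ n) :=
    Submodule.coe_pi _ _
  have hbox_le (n : ℕ) : box n ≤ (F.preimageSpanPow π n).toAddSubgroup :=
    toAddSubgroup_mono (F.pi_span_pow_le_preimageSpanPow π n)
  have hbox_fin (n : ℕ) : (box n).FiniteIndex := AddSubgroup.finiteIndex_of_isOpen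
    (hbox_coe n ▸ isOpen_set_pi Set.finite_univ fun _ _ => hopen n)
  have hfin (n : ℕ) : (F.preimageSpanPow π n).toAddSubgroup.FiniteIndex :=
    AddSubgroup.finiteIndex_of_le (hbox_le n)
  have hindex := F.card_pow_mul_le_index_preimageSpanPow π hinj
    (LinearMap.span_range_restrictScalars_comp_compLeft f hf) (p := IsLocalRing.maximalIdeal R)
    hπ.not_isUnit hπ.ne_zero hfin v
  have hmeas := AddSubgroup.measurableSet_of_le
    (hbox_coe v ▸ MeasurableSet.univ_pi fun _ => (hopen v).measurableSet) (hbox_le v)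
  have hset : {x : Fin d → R | ∀ i, f (fun j => algebraMap R Rt (x j)) i ∈
      Ideal.span {algebraMap R Rt π ^ v}} = (F.preimageSpanPow π v).toAddSubgroup :=
    Set.ext fun x => (F.mem_preimageSpanPow π).symm
  have := hfin v
  rw [hset, AddSubgroup.measure_eq_inv_index μ _ hmeas, ENNReal.toReal_inv,
    ENNReal.toReal_natCast, inv_pow, ← Nat.cast_pow]
  exact inv_anti₀ (Nat.cast_pos.mpr (pow_pos Nat.card_pos _)) (by exact_mod_cast hindex)

/-- For a surjective `R̃`-linear map `f : R̃^d → R̃^r`, where `R̃` is the ring of integers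
of a finite extension of the fraction field of a complete DVR `R` with finite residue
field of cardinality `q`, the Haar probability that a random `x ∈ R^d` satisfies
`f x ∈ π^v R̃^r` is at most `q^{-rv}`. -/
theorem stmt11 {R : Type*} [CommRing R] [IsDomain R] [IsDiscreteValuationRing R]
    [TopologicalSpace R] [IsTopologicalRing R] [CompactSpace R]
    [MeasurableSpace R] [BorelSpace R]
    [Finite (R ⧸ IsLocalRing.maximalIdeal R)]
    (π : R) (hπ : Irreducible π)
    (hopen : ∀ n : ℕ, IsOpen ((Ideal.span {π} ^ n : Ideal R) : Set R))
    {Rt : Type*} [CommRing Rt] [IsDomain Rt] [IsDiscreteValuationRing Rt]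
    [Algebra R Rt] [Module.Finite R Rt]
    (hinj : Function.Injective (algebraMap R Rt))
    {d r : ℕ}
    (μ : Measure (Fin d → R)) [μ.IsAddHaarMeasure] [IsProbabilityMeasure μ]
    (f : (Fin d → Rt) →ₗ[Rt] (Fin r → Rt)) (hf : Function.Surjective f)
    (v : ℕ) :
    (μ {x | ∀ i, f (fun j => algebraMap R Rt (x j)) i ∈
        Ideal.span {algebraMap R Rt π ^ v}}).toReal ≤
      ((Nat.card (R ⧸ IsLocalRing.maximalIdeal R) : ℝ))⁻¹ ^ (r * v) :=
  stmt11_general π hπ hopen hinj μ f hf v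
end

section
/- Let $h : R^d \to R^r$ be a surjective $R$-linear map, where $R$ is a complete discrete valuation ring with uniformizer $\pi$ and finite residue field of cardinality $q$. Then for every integer $v \geq 0$, the probability (with respect to the Haar probability measure on $R^d$) that $h(x) \in \pi^v R^r$ equals $q^{-rv}$. -/
open MeasureTheory Set

/-!
The set in question is the preimage `S` under `h` of the subgroup `(π^v R)^r`, whose index is
`q^(rv)`; surjectivity of `h` makes `S` a subgroup of the same index. A translation-invariant
probability measure gives each of the finitely many cosets of a measurable finite-index subgroup
the same mass, so `μ S = q^(-rv)`. Measurability of `S` comes from the box `(π^v R)^d ⊆ S`: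
`S` is a countable union of translates of that box.
-/

theorem Irreducible.index_span_pow {R : Type*} [CommRing R] [IsDomain R]
    [IsDiscreteValuationRing R] {π : R} (hπ : Irreducible π) (v : ℕ) :
    (Ideal.span {π ^ v}).toAddSubgroup.index = Nat.card (R ⧸ IsLocalRing.maximalIdeal R) ^ v := by
  have hm : IsLocalRing.maximalIdeal R ≠ ⊥ := fun h =>
    IsDiscreteValuationRing.not_isField R (IsLocalRing.isField_iff_maximalIdeal_eq.mpr h)
  rw [← Ideal.span_singleton_pow, ← hπ.maximalIdeal_eq]
  exact cardQuot_pow_of_prime hm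

theorem AddSubgroup.measure_eq_inv_index_s12 {G : Type*} [AddGroup G] [MeasurableSpace G]
    [MeasurableAdd G] (H : AddSubgroup G) [H.FiniteIndex] (hH : MeasurableSet (H : Set G))
    (μ : Measure G) [μ.IsAddLeftInvariant] [IsProbabilityMeasure μ] :
    μ H = (H.index : ENNReal)⁻¹ := by
  refine ENNReal.eq_inv_of_mul_eq_one_left ?_
  rw [mul_comm, H.index_mul_measure hH μ, measure_univ]

theorem AddSubgroup.measurableSet_of_le_s12 {G : Type*} [AddGroup G] [MeasurableSpace G]
    [MeasurableAdd G] {H K : AddSubgroup G} (hHK : H ≤ K) [Countable (G ⧸ H)]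
    (hH : MeasurableSet (H : Set G)) : MeasurableSet (K : Set G) := by
  have hK : (K : Set G) = ⋃ (c : G ⧸ H) (_ : c.out ∈ K), (-c.out + ·) ⁻¹' (H : Set G) := by
    ext x
    simp only [mem_iUnion, mem_preimage, SetLike.mem_coe, exists_prop]
    constructor
    · intro hx
      refine ⟨(x : G ⧸ H), ?_, ?_⟩
      · obtain ⟨y, hy⟩ := QuotientAddGroup.mk_out_eq_add H x
        rw [hy]; exact K.add_mem hx (hHK y.2)
      · exact QuotientAddGroup.eq.mp (QuotientAddGroup.out_eq' (x : G ⧸ H))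
    · rintro ⟨c, hc, hx⟩
      simpa using K.add_mem hc (hHK hx)
  rw [hK]
  exact MeasurableSet.iUnion fun c => MeasurableSet.iUnion fun _ => measurable_const_add _ hH

theorem LinearMap.apply_mem_of_forall_mem {R : Type*} [CommRing R] {ι κ : Type*} [Fintype ι]
    (f : (ι → R) →ₗ[R] (κ → R)) (I : Ideal R) {x : ι → R} (hx : ∀ j, x j ∈ I) (i : κ) :
    f x i ∈ I := by
  classical
  rw [f.pi_apply_eq_sum_univ x, Finset.sum_apply]
  exact I.sum_mem fun j _ => I.mul_mem_right _ (hx j)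

theorem stmt12_general {R : Type*} [CommRing R] [IsDomain R] [IsDiscreteValuationRing R]
    [TopologicalSpace R] [IsTopologicalRing R] [MeasurableSpace R] [BorelSpace R]
    [Finite (R ⧸ IsLocalRing.maximalIdeal R)]
    (π : R) (hπ : Irreducible π)
    (hopen : ∀ n : ℕ, IsOpen ((Ideal.span {π} ^ n : Ideal R) : Set R))
    {d r : ℕ}
    (μ : Measure (Fin d → R)) [μ.IsAddHaarMeasure] [IsProbabilityMeasure μ]
    (h : (Fin d → R) →ₗ[R] (Fin r → R)) (hh : Function.Surjective h)
    (v : ℕ) :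
    (μ {x | ∀ i, h x i ∈ Ideal.span {π ^ v}}).toReal =
      ((Nat.card (R ⧸ IsLocalRing.maximalIdeal R) : ℝ))⁻¹ ^ (r * v) := by
  have hq : Nat.card (R ⧸ IsLocalRing.maximalIdeal R) ≠ 0 := Nat.card_pos.ne'
  set J := (Ideal.span {π ^ v}).toAddSubgroup
  have hJ : J.FiniteIndex := ⟨by rw [hπ.index_span_pow]; exact pow_ne_zero _ hq⟩
  let B := AddSubgroup.pi univ fun _ : Fin d => J
  have hB : B.FiniteIndex := ⟨by simp [B, AddSubgroup.index_pi, hJ.index_ne_zero]⟩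
  let S := (AddSubgroup.pi univ fun _ : Fin r => J).comap h.toAddMonoidHom
  have hBS : B ≤ S := fun x hx i _ => h.apply_mem_of_forall_mem _ (fun j => hx j trivial) i
  have hJmeas : MeasurableSet (J : Set R) := by
    simpa [J, Ideal.span_singleton_pow] using (hopen v).measurableSet
  have hS : MeasurableSet (S : Set (Fin d → R)) :=
    AddSubgroup.measurableSet_of_le_s12 hBS (MeasurableSet.univ_pi fun _ => hJmeas)
  have hindex : S.index = (Nat.card (R ⧸ IsLocalRing.maximalIdeal R) ^ v) ^ r := by
    rw [AddSubgroup.index_comap_of_surjective _ hh, AddSubgroup.index_pi, hπ.index_span_pow]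
    simp
  have hSfin : S.FiniteIndex := ⟨by rw [hindex]; exact pow_ne_zero _ (pow_ne_zero _ hq)⟩
  have hset : {x | ∀ i, h x i ∈ Ideal.span {π ^ v}} = (S : Set (Fin d → R)) := by
    ext x; simp [S, J, AddSubgroup.mem_pi]
  rw [hset, S.measure_eq_inv_index_s12 hS μ, hindex]
  simp [pow_mul']

/-- For a surjective linear map `h : R^d → R^r` over a complete DVR `R` with finite
residue field of cardinality `q`, the Haar probability of `{x | h x ∈ π^v R^r}` is
exactly `q^{-rv}`. -/
theorem stmt12 {R : Type*} [CommRing R] [IsDomain R] [IsDiscreteValuationRing R]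
    [TopologicalSpace R] [IsTopologicalRing R] [CompactSpace R] [MeasurableSpace R] [BorelSpace R]
    [Finite (R ⧸ IsLocalRing.maximalIdeal R)]
    (π : R) (hπ : Irreducible π)
    (hopen : ∀ n : ℕ, IsOpen ((Ideal.span {π} ^ n : Ideal R) : Set R))
    {d r : ℕ}
    (μ : Measure (Fin d → R)) [μ.IsAddHaarMeasure] [IsProbabilityMeasure μ]
    (h : (Fin d → R) →ₗ[R] (Fin r → R)) (hh : Function.Surjective h)
    (v : ℕ) :
    (μ {x | ∀ i, h x i ∈ Ideal.span {π ^ v}}).toReal =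
      ((Nat.card (R ⧸ IsLocalRing.maximalIdeal R) : ℝ))⁻¹ ^ (r * v) :=
  stmt12_general π hπ hopen μ h hh v
end

section
/- Let $R$ be a discrete valuation ring with valuation $v_R$, uniformizer $\pi$, and fraction field $K$. Let $M, M' \in M_d(R)$ be congruent modulo $\pi^N$, both admitting LU decompositions, and suppose that for each $i \leq d$, the valuation $W_i$ of the $i$-th principal minor of $M$ satisfies $W_i < N$. Then for all $i > j$ the principal minors of $M$ and $M'$ have equal valuations and $L(M)_{i,j} \equiv L(M')_{i,j} \pmod{\pi^{N - 2 W_j(M)}}$, where $L(M)$ denotes the unit lower triangular factor of the LU decomposition. -/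
/-!
By Cramer's rule applied to `M = L U`, the entry `L i j` (`i > j`) is the quotient
`A / δ_j` of the minor `A` of `M` on rows `0, …, j - 1, i` and columns `0, …, j` by the
leading principal minor `δ_j`. Both are polynomial in the entries of `M`, hence change by a
multiple of `π ^ N` when `M` is replaced by `M'`. Since `v(δ_j) = W_j < N`, also
`v(δ_j') = W_j`, and `A / δ - A' / δ' = (A δ' - A' δ) / (δ δ')` has numerator divisible by
`π ^ N` and denominator of valuation `2 W_j`.
-/

open Matrix Function

namespace Matrix

variable {S : Type*} [CommRing S]

theorem det_sub_mem_of_sub_mem {n : Type*} [Fintype n] [DecidableEq n] (I : Ideal S)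
    {X Y : Matrix n n S} (h : ∀ p q, X p q - Y p q ∈ I) : X.det - Y.det ∈ I := by
  have hXY : (Ideal.Quotient.mk I).mapMatrix X = (Ideal.Quotient.mk I).mapMatrix Y := by
    ext p q
    exact Ideal.Quotient.mk_eq_mk_iff_sub_mem _ _ |>.2 (h p q)
  rw [← Ideal.Quotient.mk_eq_mk_iff_sub_mem, RingHom.map_det, RingHom.map_det, hXY]

theorem submatrix_castLE_mul_of_isUpperTriangular {l m : Type*} {n d : ℕ} (h : n ≤ d)
    (A : Matrix m (Fin d) S) {B : Matrix (Fin d) (Fin d) S} (hB : B.IsUpperTriangular)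
    (r : l → m) :
    (A * B).submatrix r (Fin.castLE h) =
      A.submatrix r (Fin.castLE h) * B.submatrix (Fin.castLE h) (Fin.castLE h) := by
  ext p q
  simp only [submatrix_apply, mul_apply]
  refine (Finset.sum_of_injOn (Fin.castLE h) (Fin.castLE_injective h).injOn
    (fun _ _ => Finset.mem_univ _) (fun k _ hk => ?_) (fun _ _ => rfl)).symm
  have hqk : Fin.castLE h q < k := by
    by_contra! hkq
    exact hk ⟨⟨k, lt_of_le_of_lt hkq q.2⟩, Finset.mem_coe.2 (Finset.mem_univ _), rfl⟩
  exact mul_eq_zero_of_right _ (hB hqk)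

/-- The minor of `L * U` on rows `0, …, j - 1, i` and columns `0, …, j` is `L i j` times its
leading principal minor of size `j + 1`. -/
theorem det_mul_submatrix_update_last {d : ℕ} {L U : Matrix (Fin d) (Fin d) S}
    (hL : L.IsLowerTriangular) (hL1 : ∀ k, L k k = 1) (hU : U.IsUpperTriangular)
    (i j : Fin d) :
    ((L * U).submatrix (update (Fin.castLE j.2) (Fin.last j) i) (Fin.castLE j.2)).det =
      L i j * ((L * U).submatrix (Fin.castLE j.2) (Fin.castLE j.2)).det := by
  set ρ := update (Fin.castLE j.2) (Fin.last j) i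
  have hρ : ∀ k : Fin j, ρ k.castSucc = Fin.castLE j.2 k.castSucc := fun k =>
    update_of_ne (Fin.castSucc_lt_last k).ne _ _
  have hL_lead : (L.submatrix (Fin.castLE j.2) (Fin.castLE j.2)).det = 1 := by
    have hlower : (L.submatrix (Fin.castLE j.2) (Fin.castLE j.2)).IsLowerTriangular :=
      fun p q hpq => hL hpq
    rw [det_of_isLowerTriangular _ hlower]
    exact Finset.prod_eq_one fun p _ => hL1 _
  have hL_rows : (L.submatrix ρ (Fin.castLE j.2)).det = L i j := by
    have hlower : (L.submatrix ρ (Fin.castLE j.2)).IsLowerTriangular := fun p q hpq => by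
      obtain ⟨k, rfl⟩ := Fin.exists_castSucc_eq.2 (Fin.ne_last_of_lt hpq)
      change L (ρ k.castSucc) _ = 0
      rw [hρ]
      exact hL hpq
    rw [det_of_isLowerTriangular _ hlower, Fin.prod_univ_castSucc]
    simp [ρ, hL1]
    rfl
  rw [submatrix_castLE_mul_of_isUpperTriangular _ _ hU,
    submatrix_castLE_mul_of_isUpperTriangular _ _ hU, det_mul, det_mul, hL_lead, hL_rows,
    one_mul]

end Matrix

theorem pow_dvd_iff_of_pow_dvd_sub {R : Type*} [CommRing R] {π x y : R} {k N : ℕ}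
    (hk : k ≤ N) (h : π ^ N ∣ x - y) : π ^ k ∣ x ↔ π ^ k ∣ y :=
  dvd_iff_dvd_of_dvd_sub ((pow_dvd_pow π hk).trans h)

theorem IsDiscreteValuationRing.exists_eq_pow_mul_unit {R : Type*} [CommRing R] [IsDomain R]
    [IsDiscreteValuationRing R] {π x : R} (hπ : Irreducible π) {n : ℕ} (h : π ^ n ∣ x)
    (h' : ¬π ^ (n + 1) ∣ x) : ∃ u : Rˣ, x = π ^ n * u := by
  obtain ⟨a, rfl⟩ := h
  have ha : IsUnit a := by
    rw [← IsLocalRing.notMem_maximalIdeal, hπ.maximalIdeal_eq, Ideal.mem_span_singleton]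
    exact fun hπa => h' (pow_succ π n ▸ mul_dvd_mul_left _ hπa)
  exact ⟨ha.unit, rfl⟩

theorem exists_sub_eq_zpow_mul_of_mul_eq {R K : Type*} [CommRing R] [Field K] [Algebra R K]
    {π a a' : R} {u u' : Rˣ} {N W : ℕ} {x x' : K} (hπ : algebraMap R K π ≠ 0)
    (hx : x * algebraMap R K (π ^ W * u) = algebraMap R K a)
    (hx' : x' * algebraMap R K (π ^ W * u') = algebraMap R K a')
    (h : π ^ N ∣ a * (π ^ W * u') - a' * (π ^ W * u)) :
    ∃ c : R, x - x' = algebraMap R K π ^ ((N : ℤ) - 2 * (W : ℤ)) * algebraMap R K c := by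
  obtain ⟨b, hb⟩ := h
  refine ⟨b * ↑(u * u')⁻¹, ?_⟩
  have hu : algebraMap R K u ≠ 0 := (u.isUnit.map _).ne_zero
  have hu' : algebraMap R K u' ≠ 0 := (u'.isUnit.map _).ne_zero
  have hb' := congrArg (algebraMap R K) hb
  simp only [map_mul, map_sub, map_pow] at hx hx' hb'
  rw [← hx, ← hx'] at hb'
  rw [zpow_sub₀ hπ, zpow_natCast, ← Nat.cast_ofNat, ← Nat.cast_mul, zpow_natCast]
  simp only [map_mul, map_units_inv, Units.val_mul]
  field_simp
  linear_combination hb'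
theorem stmt14_general {R : Type*} [CommRing R] [IsDomain R] [IsDiscreteValuationRing R]
    (π : R) (hπ : Irreducible π) {d N : ℕ}
    (M M' : Matrix (Fin d) (Fin d) R)
    (hcong : ∀ i j, M i j - M' i j ∈ Ideal.span {π} ^ N)
    (W : Fin d → ℕ)
    (hW : ∀ i : Fin d,
      π ^ W i ∣ (M.submatrix (Fin.castLE i.2) (Fin.castLE i.2)).det ∧
      ¬ π ^ (W i + 1) ∣ (M.submatrix (Fin.castLE i.2) (Fin.castLE i.2)).det)
    (hWN : ∀ i, W i < N)
    (Lm Um Lm' Um' : Matrix (Fin d) (Fin d) (FractionRing R))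
    (h1 : ∀ i j : Fin d, i < j → Lm i j = 0) (h2 : ∀ i, Lm i i = 1)
    (h3 : ∀ i j : Fin d, j < i → Um i j = 0)
    (h4 : M.map (algebraMap R (FractionRing R)) = Lm * Um)
    (h1' : ∀ i j : Fin d, i < j → Lm' i j = 0) (h2' : ∀ i, Lm' i i = 1)
    (h3' : ∀ i j : Fin d, j < i → Um' i j = 0)
    (h4' : M'.map (algebraMap R (FractionRing R)) = Lm' * Um') :
    (∀ i : Fin d,
      π ^ W i ∣ (M'.submatrix (Fin.castLE i.2) (Fin.castLE i.2)).det ∧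
      ¬ π ^ (W i + 1) ∣ (M'.submatrix (Fin.castLE i.2) (Fin.castLE i.2)).det) ∧
    (∀ i j : Fin d, j < i → ∃ c : R,
      Lm i j - Lm' i j =
        algebraMap R (FractionRing R) π ^ ((N : ℤ) - 2 * (W j : ℤ)) *
          algebraMap R (FractionRing R) c) := by
  set φ := algebraMap R (FractionRing R)
  have hdet : ∀ {m : ℕ} (r c : Fin m → Fin d),
      π ^ N ∣ (M.submatrix r c).det - (M'.submatrix r c).det := fun r c => by
    rw [← Ideal.mem_span_singleton, ← Ideal.span_singleton_pow]
    exact det_sub_mem_of_sub_mem _ fun p q => hcong (r p) (c q)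
  have hW' : ∀ i : Fin d,
      π ^ W i ∣ (M'.submatrix (Fin.castLE i.2) (Fin.castLE i.2)).det ∧
      ¬ π ^ (W i + 1) ∣ (M'.submatrix (Fin.castLE i.2) (Fin.castLE i.2)).det := fun i =>
    ⟨(pow_dvd_iff_of_pow_dvd_sub (hWN i).le (hdet _ _)).1 (hW i).1,
      mt (pow_dvd_iff_of_pow_dvd_sub (hWN i) (hdet _ _)).2 (hW i).2⟩
  refine ⟨hW', fun i j _ => ?_⟩
  have hminor : ∀ (X : Matrix (Fin d) (Fin d) R) (L U : Matrix (Fin d) (Fin d) (FractionRing R)),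
      L.IsLowerTriangular → (∀ k, L k k = 1) → U.IsUpperTriangular → X.map φ = L * U →
      L i j * φ (X.submatrix (Fin.castLE j.2) (Fin.castLE j.2)).det =
        φ (X.submatrix (update (Fin.castLE j.2) (Fin.last j) i) (Fin.castLE j.2)).det := by
    intro X L U hL hL1 hU hXLU
    simp only [RingHom.map_det, RingHom.mapMatrix_apply, ← submatrix_map, hXLU]
    exact (det_mul_submatrix_update_last hL hL1 hU i j).symm
  obtain ⟨u, hu⟩ := IsDiscreteValuationRing.exists_eq_pow_mul_unit hπ (hW j).1 (hW j).2
  obtain ⟨u', hu'⟩ := IsDiscreteValuationRing.exists_eq_pow_mul_unit hπ (hW' j).1 (hW' j).2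
  refine exists_sub_eq_zpow_mul_of_mul_eq
    ((map_ne_zero_iff _ (IsFractionRing.injective R _)).2 hπ.ne_zero)
    (hu ▸ hminor M Lm Um (fun _ _ h => h1 _ _ h) h2 (fun _ _ h => h3 _ _ h) h4)
    (hu' ▸ hminor M' Lm' Um' (fun _ _ h => h1' _ _ h) h2' (fun _ _ h => h3' _ _ h) h4') ?_
  rw [← hu, ← hu']
  exact dvd_mul_sub_mul (hdet _ _) (dvd_sub_comm.1 (hdet _ _))

/-- If `M ≡ M' (mod π^N)`, both admit LU decompositions over `K = Frac R`, and the
valuations `W i` of the principal minors of `M` satisfy `W i < N`, then the principal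
minors of `M'` have the same valuations and
`L(M)_{i,j} ≡ L(M')_{i,j} (mod π^{N - 2 W j})` for all `i > j`. -/
theorem stmt14 {R : Type*} [CommRing R] [IsDomain R] [IsDiscreteValuationRing R]
    (π : R) (hπ : Irreducible π) {d N : ℕ} (hN : 0 < N)
    (M M' : Matrix (Fin d) (Fin d) R)
    (hcong : ∀ i j, M i j - M' i j ∈ Ideal.span {π} ^ N)
    (W : Fin d → ℕ)
    (hW : ∀ i : Fin d,
      π ^ W i ∣ (M.submatrix (Fin.castLE i.2) (Fin.castLE i.2)).det ∧
      ¬ π ^ (W i + 1) ∣ (M.submatrix (Fin.castLE i.2) (Fin.castLE i.2)).det)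
    (hWN : ∀ i, W i < N)
    (Lm Um Lm' Um' : Matrix (Fin d) (Fin d) (FractionRing R))
    (h1 : ∀ i j : Fin d, i < j → Lm i j = 0) (h2 : ∀ i, Lm i i = 1)
    (h3 : ∀ i j : Fin d, j < i → Um i j = 0)
    (h4 : M.map (algebraMap R (FractionRing R)) = Lm * Um)
    (h1' : ∀ i j : Fin d, i < j → Lm' i j = 0) (h2' : ∀ i, Lm' i i = 1)
    (h3' : ∀ i j : Fin d, j < i → Um' i j = 0)
    (h4' : M'.map (algebraMap R (FractionRing R)) = Lm' * Um') :
    (∀ i : Fin d,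
      π ^ W i ∣ (M'.submatrix (Fin.castLE i.2) (Fin.castLE i.2)).det ∧
      ¬ π ^ (W i + 1) ∣ (M'.submatrix (Fin.castLE i.2) (Fin.castLE i.2)).det) ∧
    (∀ i j : Fin d, j < i → ∃ c : R,
      Lm i j - Lm' i j =
        algebraMap R (FractionRing R) π ^ ((N : ℤ) - 2 * (W j : ℤ)) *
          algebraMap R (FractionRing R) c) :=
  stmt14_general π hπ M M' hcong W hW hWN Lm Um Lm' Um' h1 h2 h3 h4 h1' h2' h3' h4'
end
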